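/- arXiv:0911.3357 — 3 statements merged into one kernel-verified Lean document; each statement's English description precedes it below -/
import Mathlib

section
/- The spectral radius ρ of M := I − D^{-1}·A·Aᵀ, where A is the reduced incidence matrix of a connected graph with reference node 0 and D is the diagonal matrix of degrees of the non-reference nodes, satisfies ρ(M) ≤ 1 − (κ / Σᵢ dᵢ)², where κ is the edge-connectivity of the graph and dᵢ are the nodal degrees. -/
open Matrix

/-- The simple graph on `n+1` nodes with edges `E \ F` (edge deletion),
determined by endpoint maps `head, tail`. -/
def graphWithout {n : ℕ} {E : Type*} (head tail : E → Fin (n + 1))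
    (F : Finset E) [DecidableEq E] : SimpleGraph (Fin (n + 1)) where
  Adj i j := i ≠ j ∧ ∃ e : E, e ∉ F ∧
    ((head e = i ∧ tail e = j) ∨ (head e = j ∧ tail e = i))
  symm := by constructor; intro i j ⟨hne, e, heF, he⟩; exact ⟨hne.symm, e, heF, he.symm⟩
  loopless := by constructor; intro i ⟨hne, _⟩; exact hne rfl

/-- The degree of a vertex: the number of edges incident on it. -/
noncomputable def vertexDegree {n : ℕ} {E : Type*} [Fintype E]
    (head tail : E → Fin (n + 1)) (v : Fin (n + 1)) : ℕ :=
  Fintype.card {e : E // head e = v ∨ tail e = v}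

/-- The spectral radius of a real square matrix: the supremum of the absolute
values of its (real) eigenvalues. -/
noncomputable def specRad {n : ℕ} (M : Matrix (Fin n) (Fin n) ℝ) : ℝ :=
  sSup {x : ℝ | ∃ μ : ℝ, x = |μ| ∧ Module.End.HasEigenvalue (Matrix.toLin' M) μ}

/-!
For an eigenpair `(μ, v)` of `M`, extend `v` by `0` at the reference node to a potential `w`.
Then `∑ₑ (w (head e) - w (tail e))² = (1 - μ) Q` and `∑ₑ (w (head e) + w (tail e))² = (1 + μ) Q`
with `Q = ∑ᵢ dᵢ vᵢ²`. Every level set `{|w| > t}` misses node `0`, so it is separated from it by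
at least `κ` edges; summing over the levels (a discrete coarea formula) gives
`κ · max |w| ≤ ∑ₑ |w (head e) ∓ w (tail e)|`. Cauchy–Schwarz, `|E| ≤ ∑ dᵢ` and `Q ≤ (∑ dᵢ) max w²`
then give `(κ / ∑ dᵢ)² ≤ 1 ∓ μ`.
-/

open Finset

section Cuts

variable {V E : Type*} [Fintype E] [DecidableEq V] (head tail : E → V)

def cutEdges (S : Finset V) : Finset E :=
  univ.filter fun e => ¬(head e ∈ S ↔ tail e ∈ S)

lemma abs_sub_truncate_add_le {x y θ : ℝ} (hθ : 0 ≤ θ) (hx : 0 ≤ x) (hy : 0 ≤ y)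
    (hθx : 0 < x → θ ≤ x) (hθy : 0 < y → θ ≤ y) :
    |max (x - θ) 0 - max (y - θ) 0| + (if (0 < x ↔ 0 < y) then 0 else θ) ≤ |x - y| := by
  rcases hx.eq_or_lt with rfl | hx <;> rcases hy.eq_or_lt with rfl | hy
  · simp
  · have := hθy hy
    simp [hy, hθ, this, abs_of_pos hy, abs_of_nonpos (sub_nonpos.2 this)]
  · have := hθx hx
    simp [hx, hθ, this, abs_of_pos hx, abs_of_nonneg (sub_nonneg.2 this)]
  · simp [hx, hy, hθx hx, hθy hy]

lemma mul_le_sum_abs_sub_of_le_card_cutEdges [Fintype V] [DecidableEq E] {κ : ℕ} {b : V}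
    (hcut : ∀ S : Finset V, S.Nonempty → b ∉ S → κ ≤ #(cutEdges head tail S))
    {u : V → ℝ} (hu : 0 ≤ u) (hub : u b = 0) (a : V) :
    κ * u a ≤ ∑ e, |u (head e) - u (tail e)| := by
  induction hN : #{i | 0 < u i} using Nat.strong_induction_on generalizing u with
  | _ N ih =>
    -- Lowering `u` by its least positive value `θ` shrinks the support `S` and saves at least
    -- `θ` on every edge of the cut of `S`.
    set S : Finset V := {i | 0 < u i}
    have hmemS : ∀ i, i ∈ S ↔ 0 < u i := fun i => by simp [S]
    rcases S.eq_empty_or_nonempty with hS | hS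
    · have : u a = 0 := (not_lt.1 fun h => by simpa [hS] using (hmemS a).2 h).antisymm (hu a)
      rw [this, mul_zero]
      positivity
    obtain ⟨i₀, hi₀, hmin⟩ := S.exists_min_image u hS
    set θ := u i₀
    have hθ : 0 < θ := (hmemS i₀).1 hi₀
    have hθle : ∀ i, 0 < u i → θ ≤ u i := fun i hi => hmin i ((hmemS i).2 hi)
    set u' : V → ℝ := fun i => max (u i - θ) 0
    have hN' : #{i | 0 < u' i} < N := by
      refine hN ▸ card_lt_card ((ssubset_iff_of_subset fun i hi => ?_).2 ⟨i₀, hi₀, ?_⟩)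
      · simp only [u', mem_filter, mem_univ, true_and, lt_max_iff, lt_irrefl, or_false] at hi
        exact (hmemS i).2 (by linarith)
      · simp [u', θ]
    have hu'a : κ * u' a ≤ ∑ e, |u' (head e) - u' (tail e)| :=
      ih _ hN' (fun i => le_max_right _ _) (by simp [u', hub, hθ.le]) rfl
    have hedge : ∀ e, |u' (head e) - u' (tail e)| + (if e ∈ cutEdges head tail S then θ else 0)
        ≤ |u (head e) - u (tail e)| := fun e => by
      simpa [cutEdges, hmemS, ite_not] using
        abs_sub_truncate_add_le hθ.le (hu _) (hu _) (hθle _) (hθle _)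
    calc (κ : ℝ) * u a ≤ κ * u' a + κ * θ := by
          rw [← mul_add]; gcongr; linarith [le_max_left (u a - θ) 0]
      _ ≤ ∑ e, |u' (head e) - u' (tail e)| + #(cutEdges head tail S) * θ := by
          gcongr; exact_mod_cast hcut S hS ((hmemS b).not.2 (by simp [hub]))
      _ = ∑ e, (|u' (head e) - u' (tail e)| + if e ∈ cutEdges head tail S then θ else 0) := by
          rw [sum_add_distrib, sum_ite_mem, univ_inter, sum_const, nsmul_eq_mul]
      _ ≤ ∑ e, |u (head e) - u (tail e)| := sum_le_sum fun e _ => hedge e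

end Cuts

lemma mulVec_eq_smul_mulVec_of_one_sub_inv_mul {ι K : Type*} [Fintype ι] [DecidableEq ι]
    [CommRing K] {D L : Matrix ι ι K} (hD : IsUnit D.det) {v : ι → K} {μ : K}
    (h : (1 - D⁻¹ * L) *ᵥ v = μ • v) : L *ᵥ v = (1 - μ) • D *ᵥ v := by
  have hDv := congrArg (D *ᵥ ·) h
  rw [mulVec_mulVec, mul_sub, mul_one, mul_nonsing_inv_cancel_left _ _ hD, sub_mulVec,
    mulVec_smul] at hDv
  rw [sub_smul, one_smul, ← hDv, sub_sub_cancel]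

section IncidenceGraph

variable {n : ℕ} {E : Type*} {head tail : E → Fin (n + 1)}

lemma transpose_mulVec_tail_eq_sub (hloop : ∀ e, head e ≠ tail e)
    {A : Matrix (Fin n) E ℝ} (hA : ∀ (i : Fin n) (e : E), A i e =
      (if head e = i.succ then 1 else if tail e = i.succ then -1 else 0 : ℝ))
    {w : Fin (n + 1) → ℝ} (hw : w 0 = 0) (e : E) :
    (Aᵀ *ᵥ Fin.tail w) e = w (head e) - w (tail e) := by
  have hsucc (x : Fin (n + 1)) : ∑ i : Fin n, (if x = i.succ then w i.succ else 0) = w x := by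
    cases x using Fin.cases <;> simp [eq_comm (a := (0 : Fin (n + 1))), Fin.succ_ne_zero, hw]
  have hA' (i : Fin n) : A i e * w i.succ
      = (if head e = i.succ then w i.succ else 0) - (if tail e = i.succ then w i.succ else 0) := by
    have := hloop e
    rw [hA]; split_ifs <;> simp_all
  simp only [mulVec, dotProduct, transpose_apply, Fin.tail, hA', sum_sub_distrib, hsucc]

def disconnectingSetCards [DecidableEq E] (head tail : E → Fin (n + 1)) : Set ℕ :=
  {k | ∃ F : Finset E, F.card = k ∧ ¬ (graphWithout head tail F).Connected}

lemma pos_of_isLeast_disconnectingSetCards [DecidableEq E]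
    (hconn : (graphWithout head tail ∅).Connected) {κ : ℕ}
    (hκ : IsLeast (disconnectingSetCards head tail) κ) : 0 < κ := by
  obtain ⟨F, hF, hdisc⟩ := hκ.1
  refine Nat.pos_of_ne_zero fun h0 => hdisc ?_
  rwa [card_eq_zero.1 (hF.trans h0)]

variable [Fintype E]

lemma vertexDegree_eq_card_add_card (hloop : ∀ e, head e ≠ tail e) (x : Fin (n + 1)) :
    vertexDegree head tail x = #{e | head e = x} + #{e | tail e = x} := by
  classical
  rw [vertexDegree, Fintype.card_subtype, filter_or, card_union_of_disjoint]
  exact disjoint_filter.2 fun e _ hh ht => hloop e (hh.trans ht.symm)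

lemma sum_vertexDegree_mul (hloop : ∀ e, head e ≠ tail e) (f : Fin (n + 1) → ℝ) :
    ∑ x, (vertexDegree head tail x : ℝ) * f x = ∑ e, (f (head e) + f (tail e)) := by
  have fiber (g : E → Fin (n + 1)) : ∑ x, (#{e | g e = x} : ℝ) * f x = ∑ e, f (g e) := by
    simp_rw [← sum_fiberwise' univ g f, sum_const, nsmul_eq_mul]
  simp_rw [vertexDegree_eq_card_add_card hloop, Nat.cast_add, add_mul, sum_add_distrib, fiber]

lemma sum_vertexDegree_succ_mul (hloop : ∀ e, head e ≠ tail e) {f : Fin (n + 1) → ℝ}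
    (hf : f 0 = 0) :
    ∑ i : Fin n, (vertexDegree head tail i.succ : ℝ) * f i.succ
      = ∑ e, (f (head e) + f (tail e)) := by
  rw [← sum_vertexDegree_mul hloop, Fin.sum_univ_succ, hf, mul_zero, zero_add]

lemma card_le_sum_vertexDegree_succ (hloop : ∀ e, head e ≠ tail e) :
    (Fintype.card E : ℝ) ≤ ∑ i : Fin n, (vertexDegree head tail i.succ : ℝ) := by
  have h := sum_vertexDegree_succ_mul hloop (f := fun x => if x = 0 then 0 else 1) (by simp)
  simp only [Fin.succ_ne_zero, if_false, mul_one] at h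
  rw [h, ← Finset.card_univ, ← nsmul_one, ← sum_const]
  refine sum_le_sum fun e _ => ?_
  have := hloop e
  split_ifs <;> simp_all

lemma sum_sq_sub_eq_of_mulVec_eq (hloop : ∀ e, head e ≠ tail e)
    {A : Matrix (Fin n) E ℝ} (hA : ∀ (i : Fin n) (e : E), A i e =
      (if head e = i.succ then 1 else if tail e = i.succ then -1 else 0 : ℝ))
    {w : Fin (n + 1) → ℝ} (hw : w 0 = 0) {μ : ℝ}
    (hL : (A * Aᵀ) *ᵥ Fin.tail w
      = (1 - μ) • (diagonal fun i => (vertexDegree head tail i.succ : ℝ)) *ᵥ Fin.tail w) :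
    ∑ e, (w (head e) - w (tail e)) ^ 2
      = (1 - μ) * ∑ i : Fin n, (vertexDegree head tail i.succ : ℝ) * w i.succ ^ 2 := by
  calc ∑ e, (w (head e) - w (tail e)) ^ 2 = (Aᵀ *ᵥ Fin.tail w) ⬝ᵥ (Aᵀ *ᵥ Fin.tail w) := by
        simp [dotProduct, transpose_mulVec_tail_eq_sub hloop hA hw, sq]
    _ = Fin.tail w ⬝ᵥ (A * Aᵀ) *ᵥ Fin.tail w := by
        rw [← mulVec_mulVec, dotProduct_mulVec _ A, ← mulVec_transpose]
    _ = _ := by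
        simp only [hL, dotProduct, Pi.smul_apply, smul_eq_mul, mulVec_diagonal, Fin.tail, mul_sum]
        exact sum_congr rfl fun i _ => by ring

lemma sum_sq_add_eq_of_mulVec_eq (hloop : ∀ e, head e ≠ tail e)
    {A : Matrix (Fin n) E ℝ} (hA : ∀ (i : Fin n) (e : E), A i e =
      (if head e = i.succ then 1 else if tail e = i.succ then -1 else 0 : ℝ))
    {w : Fin (n + 1) → ℝ} (hw : w 0 = 0) {μ : ℝ}
    (hL : (A * Aᵀ) *ᵥ Fin.tail w
      = (1 - μ) • (diagonal fun i => (vertexDegree head tail i.succ : ℝ)) *ᵥ Fin.tail w) :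
    ∑ e, (w (head e) + w (tail e)) ^ 2
      = (1 + μ) * ∑ i : Fin n, (vertexDegree head tail i.succ : ℝ) * w i.succ ^ 2 := by
  have hmass := sum_vertexDegree_succ_mul hloop (f := fun x => w x ^ 2) (by simp [hw])
  calc ∑ e, (w (head e) + w (tail e)) ^ 2
      = 2 * ∑ e, (w (head e) ^ 2 + w (tail e) ^ 2) - ∑ e, (w (head e) - w (tail e)) ^ 2 := by
        rw [mul_sum, ← sum_sub_distrib]
        exact sum_congr rfl fun e _ => by ring
    _ = _ := by rw [sum_sq_sub_eq_of_mulVec_eq hloop hA hw hL, ← hmass]; ring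

variable [DecidableEq E]

lemma mem_iff_mem_of_reachable_graphWithout_cutEdges {S : Finset (Fin (n + 1))}
    {a b : Fin (n + 1)} (h : (graphWithout head tail (cutEdges head tail S)).Reachable a b) :
    a ∈ S ↔ b ∈ S := by
  obtain ⟨p⟩ := h
  induction p with
  | nil => rfl
  | cons hadj _ ih =>
    obtain ⟨-, e, he, hends⟩ := hadj
    have hS : head e ∈ S ↔ tail e ∈ S := by simpa [cutEdges] using he
    rcases hends with ⟨rfl, rfl⟩ | ⟨rfl, rfl⟩
    exacts [hS.trans ih, hS.symm.trans ih]

lemma le_card_cutEdges {κ : ℕ} (hκ : κ ∈ lowerBounds (disconnectingSetCards head tail))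
    {S : Finset (Fin (n + 1))} (hS : S.Nonempty) {b : Fin (n + 1)} (hb : b ∉ S) :
    κ ≤ #(cutEdges head tail S) := by
  obtain ⟨a, ha⟩ := hS
  exact hκ ⟨_, rfl, fun hconn =>
    hb ((mem_iff_mem_of_reachable_graphWithout_cutEdges (hconn.preconnected a b)).1 ha)⟩

lemma le_vertexDegree {κ : ℕ} (hκ : κ ∈ lowerBounds (disconnectingSetCards head tail))
    {v : Fin (n + 1)} (hv : v ≠ 0) : κ ≤ vertexDegree head tail v := by
  rw [vertexDegree, Fintype.card_subtype]
  refine (le_card_cutEdges hκ (singleton_nonempty v) (by simpa using hv.symm)).trans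
    (card_le_card fun e he => ?_)
  simp only [cutEdges, mem_filter, mem_singleton] at he ⊢
  tauto

lemma sq_mul_sum_vertexDegree_mul_sq_le (hloop : ∀ e, head e ≠ tail e) {κ : ℕ}
    (hκ : κ ∈ lowerBounds (disconnectingSetCards head tail))
    {w : Fin (n + 1) → ℝ} (hw : w 0 = 0) {g : E → ℝ}
    (hg : ∀ e, |(|w (head e)| - |w (tail e)|)| ≤ |g e|) :
    (κ : ℝ) ^ 2 * ∑ i : Fin n, (vertexDegree head tail i.succ : ℝ) * w i.succ ^ 2
      ≤ (∑ i : Fin n, (vertexDegree head tail i.succ : ℝ)) ^ 2 * ∑ e, g e ^ 2 := by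
  set T := ∑ i : Fin n, (vertexDegree head tail i.succ : ℝ)
  obtain ⟨a, -, ha⟩ := exists_max_image univ (fun x => |w x|) univ_nonempty
  have hcoarea : κ * |w a| ≤ ∑ e, |g e| :=
    (mul_le_sum_abs_sub_of_le_card_cutEdges head tail (fun S hS h0 => le_card_cutEdges hκ hS h0)
      (b := 0) (u := fun x => |w x|) (fun x => abs_nonneg _) (by simp [hw]) a).trans
      (sum_le_sum fun e _ => hg e)
  have hmass : ∑ i : Fin n, (vertexDegree head tail i.succ : ℝ) * w i.succ ^ 2 ≤ T * |w a| ^ 2 := by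
    rw [sum_mul]
    refine sum_le_sum fun i _ => mul_le_mul_of_nonneg_left ?_ (Nat.cast_nonneg _)
    exact sq_le_sq.2 (by simpa using ha i.succ (mem_univ _))
  have hcs : (∑ e, |g e|) ^ 2 ≤ Fintype.card E * ∑ e, g e ^ 2 := by
    simpa using sq_sum_le_card_mul_sum_sq (s := univ) (f := fun e => |g e|)
  have hT : 0 ≤ T := by positivity
  calc (κ : ℝ) ^ 2 * ∑ i : Fin n, (vertexDegree head tail i.succ : ℝ) * w i.succ ^ 2
      ≤ (κ : ℝ) ^ 2 * (T * |w a| ^ 2) := by gcongr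
    _ = T * (κ * |w a|) ^ 2 := by ring
    _ ≤ T * (∑ e, |g e|) ^ 2 := by gcongr
    _ ≤ T * (Fintype.card E * ∑ e, g e ^ 2) := by gcongr
    _ ≤ T * (T * ∑ e, g e ^ 2) := by gcongr; exact card_le_sum_vertexDegree_succ hloop
    _ = T ^ 2 * ∑ e, g e ^ 2 := by ring

lemma abs_le_of_hasEigenvalue (hloop : ∀ e, head e ≠ tail e)
    {A : Matrix (Fin n) E ℝ} (hA : ∀ (i : Fin n) (e : E), A i e =
      (if head e = i.succ then 1 else if tail e = i.succ then -1 else 0 : ℝ))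
    (hdeg : ∀ i : Fin n, 0 < vertexDegree head tail i.succ) {κ : ℕ}
    (hκ : κ ∈ lowerBounds (disconnectingSetCards head tail)) {μ : ℝ}
    (hμ : Module.End.HasEigenvalue (toLin' (1 -
      (diagonal fun i => (vertexDegree head tail i.succ : ℝ))⁻¹ * (A * Aᵀ))) μ) :
    |μ| ≤ 1 - (κ / ∑ i : Fin n, (vertexDegree head tail i.succ : ℝ)) ^ 2 := by
  set T := ∑ i : Fin n, (vertexDegree head tail i.succ : ℝ)
  have hd (i : Fin n) : (0 : ℝ) < vertexDegree head tail i.succ := Nat.cast_pos.2 (hdeg i)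
  obtain ⟨v, hv⟩ := hμ.exists_hasEigenvector
  obtain ⟨i₀, hi₀⟩ : ∃ i, v i ≠ 0 := Function.ne_iff.1 hv.2
  set w : Fin (n + 1) → ℝ := Fin.cons 0 v
  have hw : w 0 = 0 := rfl
  have hL : (A * Aᵀ) *ᵥ Fin.tail w
      = (1 - μ) • (diagonal fun i => (vertexDegree head tail i.succ : ℝ)) *ᵥ Fin.tail w :=
    mulVec_eq_smul_mulVec_of_one_sub_inv_mul (by simp [det_diagonal, prod_ne_zero_iff, (hd _).ne'])
      (by rw [Fin.tail_cons, ← toLin'_apply]; exact hv.apply_eq_smul)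
  set Q := ∑ i : Fin n, (vertexDegree head tail i.succ : ℝ) * w i.succ ^ 2
  have hQ : 0 < Q := sum_pos' (fun i _ => by positivity)
    ⟨i₀, mem_univ _, by simpa [w] using mul_pos (hd i₀) (by positivity : 0 < v i₀ ^ 2)⟩
  have hT : 0 < T := sum_pos (fun i _ => hd i) ⟨i₀, mem_univ _⟩
  have hbound (c : ℝ) (h : (κ : ℝ) ^ 2 * Q ≤ T ^ 2 * (c * Q)) : (κ / T) ^ 2 ≤ c := by
    rw [div_pow, div_le_iff₀ (by positivity)]
    exact le_of_mul_le_mul_right (by linarith) hQ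
  have hminus := hbound _ (sum_sq_sub_eq_of_mulVec_eq hloop hA hw hL ▸
    sq_mul_sum_vertexDegree_mul_sq_le hloop hκ hw fun e => abs_abs_sub_abs_le_abs_sub _ _)
  have hplus := hbound _ (sum_sq_add_eq_of_mulVec_eq hloop hA hw hL ▸
    sq_mul_sum_vertexDegree_mul_sq_le hloop hκ hw fun e => by
      simpa using abs_abs_sub_abs_le_abs_sub (w (head e)) (-w (tail e)))
  exact abs_le.2 ⟨by linarith, by linarith⟩

end IncidenceGraph

/-- **Upper bound on the spectral radius of `M = I − D⁻¹·A·Aᵀ` via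
edge-connectivity (Cheeger's inequality).**  `G` is a connected graph on
`n+1` nodes; node `0` is the reference; `A` is the incidence matrix with node
`0`'s row removed; `D = diag(d₁,…,dₙ)` is the diagonal matrix of the degrees
of the non-reference nodes; `κ` is the edge-connectivity of `G`, i.e. the
minimum number of edges whose removal disconnects `G`.  Then
`ρ(M) ≤ 1 − (κ / Σᵢ dᵢ)²`. -/
theorem spectral_radius_upper_bound
    {n : ℕ} {E : Type*} [Fintype E] [DecidableEq E]
    (head tail : E → Fin (n + 1)) (hloop : ∀ e, head e ≠ tail e)
    (hconn : (graphWithout head tail ∅).Connected)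
    (A : Matrix (Fin n) E ℝ)
    (hA : ∀ (i : Fin n) (e : E), A i e =
      (if head e = i.succ then 1 else if tail e = i.succ then -1 else 0 : ℝ))
    (D : Matrix (Fin n) (Fin n) ℝ)
    (hD : D = Matrix.diagonal fun i => (vertexDegree head tail i.succ : ℝ))
    (M : Matrix (Fin n) (Fin n) ℝ) (hM : M = 1 - D⁻¹ * (A * Aᵀ))
    (κ : ℕ)
    (hκ : IsLeast {k : ℕ | ∃ F : Finset E, F.card = k ∧
      ¬ (graphWithout head tail F).Connected} κ) :
    specRad M ≤ 1 - (κ / ∑ i : Fin n, (vertexDegree head tail i.succ : ℝ)) ^ 2 := by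
  subst hD hM
  obtain ⟨F, -, hF⟩ := hκ.1
  have hn : n ≠ 0 := by
    rintro rfl
    exact hF (.of_subsingleton (V := Fin 1))
  have hκdeg (i : Fin n) : κ ≤ vertexDegree head tail i.succ := le_vertexDegree hκ.2 i.succ_ne_zero
  have hκpos : 0 < κ := pos_of_isLeast_disconnectingSetCards hconn hκ
  have hκT : (κ : ℝ) ≤ ∑ i : Fin n, (vertexDegree head tail i.succ : ℝ) :=
    (Nat.cast_le.2 (hκdeg ⟨0, Nat.pos_of_ne_zero hn⟩)).trans
      (single_le_sum (f := fun i : Fin n => (vertexDegree head tail i.succ : ℝ))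
        (fun i _ => Nat.cast_nonneg _) (mem_univ _))
  -- `sSup ∅ = 0`, so the bound has to be nonnegative as well.
  refine Real.sSup_le (fun x ⟨μ, hx, hμ⟩ => hx ▸
    abs_le_of_hasEigenvalue hloop hA (fun i => hκpos.trans_le (hκdeg i)) hκ.2 hμ) ?_
  have hratio : (κ : ℝ) / ∑ i : Fin n, (vertexDegree head tail i.succ : ℝ) ≤ 1 :=
    div_le_one_of_le₀ hκT (by positivity)
  exact sub_nonneg.2 (pow_le_one₀ (by positivity) hratio)
end

section
/- For any zero-error distributed source coding scheme (Slepian-Wolf converse): if encoders of rates R₁ and R₂ for sources X and Y (i.i.d. with joint distribution p) allow reconstruction with vanishing error probability, then R₁ ≥ H(X|Y), R₂ ≥ H(Y|X), and R₁ + R₂ ≥ H(X,Y). -/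
open Filter

/-- Shannon entropy (in bits) of a probability mass function on a finite
alphabet (with the convention `0·log 0 = 0`). -/
noncomputable def shannonH {α : Type*} [Fintype α] (q : α → ℝ) : ℝ :=
  -∑ a, q a * Real.logb 2 (q a)

/-!
Given the side information `bᴺ`, a decoder that reads one of `K` indices is correct on at most
`K` sequences `aᴺ`. By the weak law of large numbers the pair `(aᴺ, bᴺ)` is typical with high
probability, and a typical pair has `q(aᴺ | bᴺ) ≤ 2^{-N(H(A|B) - ε)}`. So the probability of
correct decoding, which tends to `1`, is at most `K · 2^{-N(H(A|B) - ε)} ≤ 2^{N(R - H(A|B) + ε)}`,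
forcing `R ≥ H(A|B) - ε`. The three bounds are this for `X` given `Y`, for `Y` given `X`, and for
the pair `(X, Y)` given nothing, with the two indices read as one.
-/

open Finset Real

lemma shannonH_comp_equiv {α β : Type*} [Fintype α] [Fintype β] (e : α ≃ β) (q : β → ℝ) :
    shannonH (fun a => q (e a)) = shannonH q := by
  rw [shannonH, shannonH, e.sum_comp (fun b => q b * logb 2 (q b))]

lemma prod_le_rpow_neg_mul_prod {ι : Type*} (s : Finset ι) {b t : ℝ} (hb : 1 < b)
    {x y : ι → ℝ} (hx : ∀ i ∈ s, 0 ≤ x i) (hxy : ∀ i ∈ s, x i ≤ y i)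
    (ht : t ≤ ∑ i ∈ s, (logb b (y i) - logb b (x i))) :
    ∏ i ∈ s, x i ≤ b ^ (-t) * ∏ i ∈ s, y i := by
  have hb0 : 0 < b := zero_lt_one.trans hb
  by_cases hzero : ∃ i ∈ s, x i = 0
  · obtain ⟨i, hi, hxi⟩ := hzero
    rw [prod_eq_zero hi hxi]
    exact mul_nonneg (rpow_nonneg hb0.le _)
      (prod_nonneg fun i hi => (hx i hi).trans (hxy i hi))
  push Not at hzero
  have hxpos : ∀ i ∈ s, 0 < x i := fun i hi => (hx i hi).lt_of_ne (hzero i hi).symm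
  have hypos : ∀ i ∈ s, 0 < y i := fun i hi => (hxpos i hi).trans_le (hxy i hi)
  have hexp : ∀ {f : ι → ℝ}, (∀ i ∈ s, 0 < f i) → ∏ i ∈ s, f i = b ^ ∑ i ∈ s, logb b (f i) :=
    fun hf => by
      rw [rpow_sum_of_pos hb0]
      exact prod_congr rfl fun i hi => (rpow_logb hb0 hb.ne' (hf i hi)).symm
  rw [hexp hxpos, hexp hypos, ← rpow_add hb0]
  rw [sum_sub_distrib] at ht
  exact rpow_le_rpow_of_exponent_le hb.le (by linarith)

lemma card_filter_comp_eq_self_le {α β : Type*} [Fintype α] [Fintype β] [DecidableEq α]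
    (f : α → β) (g : β → α) : #{a | g (f a) = a} ≤ Fintype.card β := by
  refine card_le_card_of_injOn f (fun a _ => mem_coe.2 (mem_univ _)) fun a ha a' ha' hf => ?_
  rw [coe_filter] at ha ha'
  rw [← ha.2, ← ha'.2, hf]

lemma nonneg_of_tendsto_one_of_le_rpow {b δ : ℝ} (hb : 1 < b) {u : ℕ → ℝ}
    (hu : Tendsto u atTop (nhds 1)) (h : ∀ N : ℕ, u N ≤ b ^ ((N : ℝ) * δ)) : 0 ≤ δ := by
  by_contra! hδ
  have hdecay : Tendsto (fun N : ℕ => b ^ ((N : ℝ) * δ)) atTop (nhds 0) := by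
    refine (tendsto_pow_atTop_nhds_zero_of_lt_one (rpow_nonneg (zero_le_one.trans hb.le) δ)
      (rpow_lt_one_of_one_lt_of_neg hb hδ)).congr fun N => ?_
    rw [mul_comm, rpow_mul (zero_le_one.trans hb.le), rpow_natCast]
  linarith [le_of_tendsto_of_tendsto' hu hdecay h]

lemma ite_le_mul_sq_div_sq {a w x : ℝ} (ha : 0 < a) (hw : 0 ≤ w) :
    (if a ≤ |x| then w else 0) ≤ w * x ^ 2 / a ^ 2 := by
  split_ifs with hax
  · rw [le_div_iff₀ (by positivity), ← sq_abs x]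
    exact mul_le_mul_of_nonneg_left (pow_le_pow_left₀ ha.le hax 2) hw
  · positivity

section IID

variable {Z : Type*} [Fintype Z]

noncomputable def iidProb (P : Z → ℝ) (N : ℕ) (E : (Fin N → Z) → Prop) [DecidablePred E] : ℝ :=
  ∑ zs, if E zs then ∏ i, P (zs i) else 0

variable {P : Z → ℝ}

lemma iidProb_nonneg (hP0 : ∀ z, 0 ≤ P z) (N : ℕ) (E : (Fin N → Z) → Prop) [DecidablePred E] :
    0 ≤ iidProb P N E :=
  sum_nonneg fun zs _ => by
    split_ifs
    exacts [prod_nonneg fun i _ => hP0 (zs i), le_rfl]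

lemma iidProb_mono (hP0 : ∀ z, 0 ≤ P z) {N : ℕ} {E F : (Fin N → Z) → Prop}
    [DecidablePred E] [DecidablePred F] (h : ∀ zs, E zs → F zs) :
    iidProb P N E ≤ iidProb P N F :=
  sum_le_sum fun zs _ => by
    have := prod_nonneg fun i (_ : i ∈ univ) => hP0 (zs i)
    split_ifs <;> tauto

lemma sum_prod_mul_prod (N : ℕ) (g : Fin N → Z → ℝ) :
    ∑ zs : Fin N → Z, (∏ i, P (zs i)) * ∏ i, g i (zs i) = ∏ i, ∑ z, P z * g i z := by
  simp_rw [← prod_mul_distrib]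
  exact (Fintype.prod_sum (fun i z => P z * g i z)).symm

lemma sum_prod_eq_one (hP : ∑ z, P z = 1) (N : ℕ) : ∑ zs : Fin N → Z, ∏ i, P (zs i) = 1 := by
  simpa [hP] using sum_prod_mul_prod (P := P) N (fun _ _ => 1)

lemma sum_prod_mul_apply (hP : ∑ z, P z = 1) {N : ℕ} (h : Z → ℝ) (j : Fin N) :
    ∑ zs : Fin N → Z, (∏ i, P (zs i)) * h (zs j) = ∑ z, P z * h z := by
  have := sum_prod_mul_prod (P := P) N (fun i z => if i = j then h z else 1)
  simp only [prod_ite_eq', mem_univ, if_true] at this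
  rw [this, prod_eq_single j (fun i _ hij => by simp [hij, hP]) (by simp)]
  simp

lemma sum_prod_mul_apply_mul_apply (hP : ∑ z, P z = 1) {N : ℕ} (h : Z → ℝ) {j k : Fin N}
    (hjk : j ≠ k) :
    ∑ zs : Fin N → Z, (∏ i, P (zs i)) * (h (zs j) * h (zs k))
      = (∑ z, P z * h z) * ∑ z, P z * h z := by
  have := sum_prod_mul_prod (P := P) N
    (fun i z => (if i = j then h z else 1) * (if i = k then h z else 1))
  simp only [prod_mul_distrib, prod_ite_eq', mem_univ, if_true] at this
  rw [this]
  have factor : ∀ i, ∑ z, P z * ((if i = j then h z else 1) * (if i = k then h z else 1))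
      = (if i = j then ∑ z, P z * h z else 1) * (if i = k then ∑ z, P z * h z else 1) := by
    intro i
    by_cases hij : i = j <;> by_cases hik : i = k <;> simp_all
  simp only [factor, prod_mul_distrib, prod_ite_eq', mem_univ, if_true]

lemma sum_prod_mul_sum_sq (hP : ∑ z, P z = 1) (N : ℕ) {h : Z → ℝ} (hh : ∑ z, P z * h z = 0) :
    ∑ zs : Fin N → Z, (∏ i, P (zs i)) * (∑ j, h (zs j)) ^ 2 = N * ∑ z, P z * h z ^ 2 := by
  have cov : ∀ j k : Fin N, ∑ zs : Fin N → Z, (∏ i, P (zs i)) * (h (zs j) * h (zs k))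
      = if j = k then ∑ z, P z * h z ^ 2 else 0 := by
    intro j k
    split_ifs with hjk
    · subst hjk
      simp_rw [← sq]
      exact sum_prod_mul_apply hP (fun z => h z ^ 2) j
    · rw [sum_prod_mul_apply_mul_apply hP h hjk, hh, zero_mul]
  calc ∑ zs : Fin N → Z, (∏ i, P (zs i)) * (∑ j, h (zs j)) ^ 2
      = ∑ j, ∑ k, ∑ zs : Fin N → Z, (∏ i, P (zs i)) * (h (zs j) * h (zs k)) := by
        simp_rw [sq, sum_mul_sum, mul_sum]
        rw [sum_comm]
        exact sum_congr rfl fun j _ => sum_comm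
    _ = N * ∑ z, P z * h z ^ 2 := by simp [cov]

lemma iidProb_le_abs_sum_le (hP0 : ∀ z, 0 ≤ P z) (hP : ∑ z, P z = 1) {N : ℕ} (hN : 0 < N)
    {h : Z → ℝ} (hh : ∑ z, P z * h z = 0) {ε : ℝ} (hε : 0 < ε) :
    iidProb P N (fun zs => N * ε ≤ |∑ j, h (zs j)|) ≤ (∑ z, P z * h z ^ 2) / (N * ε ^ 2) :=
  calc iidProb P N (fun zs => N * ε ≤ |∑ j, h (zs j)|)
      ≤ ∑ zs : Fin N → Z, (∏ i, P (zs i)) * (∑ j, h (zs j)) ^ 2 / (N * ε) ^ 2 :=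
        sum_le_sum fun zs _ =>
          ite_le_mul_sq_div_sq (by positivity) (prod_nonneg fun i _ => hP0 (zs i))
    _ = (∑ z, P z * h z ^ 2) / (N * ε ^ 2) := by
        rw [← sum_div, sum_prod_mul_sum_sq hP N hh]
        field_simp

theorem tendsto_iidProb_le_abs_sum_sub (hP0 : ∀ z, 0 ≤ P z) (hP : ∑ z, P z = 1) (g : Z → ℝ)
    {ε : ℝ} (hε : 0 < ε) :
    Tendsto (fun N : ℕ => iidProb P N
        (fun zs => N * ε ≤ |∑ j, g (zs j) - N * ∑ z, P z * g z|)) atTop (nhds 0) := by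
  set m := ∑ z, P z * g z
  have hcentered : ∑ z, P z * (g z - m) = 0 := by
    simp [mul_sub, sum_sub_distrib, ← sum_mul, hP, m]
  have hsum : ∀ (N : ℕ) (zs : Fin N → Z), ∑ j, g (zs j) - N * m = ∑ j, (g (zs j) - m) := by
    simp [sum_sub_distrib]
  refine squeeze_zero' (Eventually.of_forall fun N => iidProb_nonneg hP0 N _)
    ((eventually_gt_atTop 0).mono fun N hN => ?_)
    ((tendsto_const_div_atTop_nhds_zero_nat ((∑ z, P z * (g z - m) ^ 2) / ε ^ 2)))
  simp only [hsum]
  rw [div_div, mul_comm (ε ^ 2)]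
  exact iidProb_le_abs_sum_le hP0 hP hN hcentered hε

lemma one_sub_sub_le_iidProb_and_not (hP0 : ∀ z, 0 ≤ P z) (hP : ∑ z, P z = 1) {N : ℕ}
    (E F : (Fin N → Z) → Prop) [DecidablePred E] [DecidablePred F] :
    1 - iidProb P N (fun zs => ¬ E zs) - iidProb P N F ≤ iidProb P N (fun zs => E zs ∧ ¬ F zs) := by
  rw [← sum_prod_eq_one hP N]
  simp only [iidProb, ← sum_sub_distrib]
  refine sum_le_sum fun zs _ => ?_
  have := prod_nonneg fun i (_ : i ∈ univ) => hP0 (zs i)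
  split_ifs <;> simp_all

end IID

section Pairs

variable {A B : Type*} [Fintype A] [Fintype B]

noncomputable def pairProb (q : A → B → ℝ) (N : ℕ) (E : (Fin N → A) → (Fin N → B) → Prop)
    [∀ as bs, Decidable (E as bs)] : ℝ :=
  ∑ as, ∑ bs, if E as bs then ∏ k, q (as k) (bs k) else 0

lemma pairProb_eq_iidProb (q : A → B → ℝ) (N : ℕ) (E : (Fin N → A) → (Fin N → B) → Prop)
    [∀ as bs, Decidable (E as bs)] :
    pairProb q N E = iidProb (fun z : A × B => q z.1 z.2) N
      (fun zs => E (fun k => (zs k).1) (fun k => (zs k).2)) := by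
  rw [pairProb, iidProb, ← Fintype.sum_prod_type',
    ← (Equiv.arrowProdEquivProdArrow (Fin N) (fun _ => A) (fun _ => B)).sum_comp]
  rfl

lemma pairProb_swap (q : A → B → ℝ) (N : ℕ) (E : (Fin N → B) → (Fin N → A) → Prop)
    [∀ bs as, Decidable (E bs as)] :
    pairProb (fun b a => q a b) N E = pairProb q N (fun as bs => E bs as) :=
  sum_comm

lemma pairProb_nonneg {q : A → B → ℝ} (hq : ∀ a b, 0 ≤ q a b) (N : ℕ)
    (E : (Fin N → A) → (Fin N → B) → Prop) [∀ as bs, Decidable (E as bs)] :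
    0 ≤ pairProb q N E := by
  rw [pairProb_eq_iidProb]
  exact iidProb_nonneg (fun z : A × B => hq z.1 z.2) N _

lemma pairProb_mono {q : A → B → ℝ} (hq : ∀ a b, 0 ≤ q a b) {N : ℕ}
    {E F : (Fin N → A) → (Fin N → B) → Prop} [∀ as bs, Decidable (E as bs)]
    [∀ as bs, Decidable (F as bs)] (h : ∀ as bs, E as bs → F as bs) :
    pairProb q N E ≤ pairProb q N F := by
  rw [pairProb_eq_iidProb, pairProb_eq_iidProb]
  exact iidProb_mono (fun z : A × B => hq z.1 z.2) fun zs => h _ _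

lemma tendsto_pairProb_of_imp {q : A → B → ℝ} (hq : ∀ a b, 0 ≤ q a b)
    {E F : ∀ N : ℕ, (Fin N → A) → (Fin N → B) → Prop} [∀ N as bs, Decidable (E N as bs)]
    [∀ N as bs, Decidable (F N as bs)] (h : ∀ N as bs, E N as bs → F N as bs)
    (hF : Tendsto (fun N => pairProb q N (F N)) atTop (nhds 0)) :
    Tendsto (fun N => pairProb q N (E N)) atTop (nhds 0) :=
  squeeze_zero (fun N => pairProb_nonneg hq N _) (fun N => pairProb_mono hq (h N)) hF

noncomputable def condInfo (q : A → B → ℝ) (a : A) (b : B) : ℝ :=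
  logb 2 (∑ a', q a' b) - logb 2 (q a b)

lemma sum_mul_condInfo (q : A → B → ℝ) :
    ∑ z : A × B, q z.1 z.2 * condInfo q z.1 z.2
      = shannonH (fun z : A × B => q z.1 z.2) - shannonH (fun b => ∑ a, q a b) := by
  have hmarginal : ∑ z : A × B, q z.1 z.2 * logb 2 (∑ a, q a z.2)
      = ∑ b, (∑ a, q a b) * logb 2 (∑ a, q a b) := by
    rw [Fintype.sum_prod_type, sum_comm]
    simp_rw [sum_mul]
  simp only [condInfo, mul_sub, sum_sub_distrib, hmarginal, shannonH]
  ring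

end Pairs

section Converse

variable {A B : Type*} [Fintype A] [Fintype B] [DecidableEq A]

lemma pairProb_decoded_le {q : A → B → ℝ} (hq : ∀ a b, 0 ≤ q a b)
    (hqsum : ∑ a, ∑ b, q a b = 1) {N K : ℕ} (enc : (Fin N → A) → Fin K)
    (dec : Fin K → (Fin N → B) → Fin N → A) (t : ℝ) :
    pairProb q N (fun as bs => dec (enc as) bs = as ∧ t ≤ ∑ k, condInfo q (as k) (bs k))
      ≤ K * 2 ^ (-t) := by
  set qB : B → ℝ := fun b => ∑ a, q a b
  have hqB : ∑ b, qB b = 1 := by rw [← hqsum, sum_comm]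
  have hcond : ∀ bs : Fin N → B,
      ∑ as, (if dec (enc as) bs = as ∧ t ≤ ∑ k, condInfo q (as k) (bs k)
        then ∏ k, q (as k) (bs k) else 0) ≤ K * (2 ^ (-t) * ∏ k, qB (bs k)) := by
    intro bs
    have hw : 0 ≤ 2 ^ (-t) * ∏ k, qB (bs k) :=
      mul_nonneg (by positivity) (prod_nonneg fun k _ => sum_nonneg fun a _ => hq a (bs k))
    have htypical : ∀ as : Fin N → A, t ≤ ∑ k, condInfo q (as k) (bs k) →
        ∏ k, q (as k) (bs k) ≤ 2 ^ (-t) * ∏ k, qB (bs k) := fun as ht =>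
      prod_le_rpow_neg_mul_prod univ one_lt_two (fun k _ => hq _ _)
        (fun k _ => single_le_sum (fun a _ => hq a (bs k)) (mem_univ (as k))) ht
    calc ∑ as, (if dec (enc as) bs = as ∧ t ≤ ∑ k, condInfo q (as k) (bs k)
          then ∏ k, q (as k) (bs k) else 0)
        ≤ ∑ as, if dec (enc as) bs = as then 2 ^ (-t) * ∏ k, qB (bs k) else 0 :=
          sum_le_sum fun as _ => by split_ifs <;> simp_all
      _ = #{as | dec (enc as) bs = as} * (2 ^ (-t) * ∏ k, qB (bs k)) := by
          rw [sum_ite, sum_const_zero, add_zero, sum_const, nsmul_eq_mul]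
      _ ≤ K * (2 ^ (-t) * ∏ k, qB (bs k)) := by
          gcongr
          simpa using card_filter_comp_eq_self_le enc (fun i => dec i bs)
  calc pairProb q N _
      = ∑ bs, ∑ as, (if dec (enc as) bs = as ∧ t ≤ ∑ k, condInfo q (as k) (bs k)
          then ∏ k, q (as k) (bs k) else 0) := sum_comm
    _ ≤ ∑ bs : Fin N → B, K * (2 ^ (-t) * ∏ k, qB (bs k)) := sum_le_sum fun bs _ => hcond bs
    _ = K * 2 ^ (-t) := by rw [← mul_sum, ← mul_sum, sum_prod_eq_one hqB, mul_one]

theorem sideInfo_coding_converse (q : A → B → ℝ) (hq : ∀ a b, 0 ≤ q a b)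
    (hqsum : ∑ a, ∑ b, q a b = 1) (R : ℝ) (K : ℕ → ℕ)
    (hK : ∀ N : ℕ, (K N : ℝ) ≤ 2 ^ ((N : ℝ) * R))
    (enc : ∀ N : ℕ, (Fin N → A) → Fin (K N))
    (dec : ∀ N : ℕ, Fin (K N) → (Fin N → B) → Fin N → A)
    (herr : Tendsto (fun N : ℕ => pairProb q N (fun as bs => dec N (enc N as) bs ≠ as))
      atTop (nhds 0)) :
    shannonH (fun z : A × B => q z.1 z.2) - shannonH (fun b => ∑ a, q a b) ≤ R := by
  set P : A × B → ℝ := fun z => q z.1 z.2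
  set μ := shannonH P - shannonH (fun b => ∑ a, q a b)
  have hP0 : ∀ z, 0 ≤ P z := fun z => hq z.1 z.2
  have hP : ∑ z, P z = 1 := (Fintype.sum_prod_type P).trans hqsum
  refine le_of_forall_pos_le_add fun ε hε => ?_
  have hatyp := tendsto_iidProb_le_abs_sum_sub hP0 hP (fun z => condInfo q z.1 z.2) hε
  rw [sum_mul_condInfo q] at hatyp
  have hbound : ∀ N : ℕ, 1 - pairProb q N (fun as bs => dec N (enc N as) bs ≠ as)
      - iidProb P N (fun zs => N * ε ≤ |∑ j, condInfo q (zs j).1 (zs j).2 - N * μ|)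
      ≤ 2 ^ ((N : ℝ) * (R - μ + ε)) := fun N =>
    calc _ ≤ iidProb P N (fun zs => dec N (enc N (fun k => (zs k).1)) (fun k => (zs k).2)
            = (fun k => (zs k).1) ∧ ¬ N * ε ≤ |∑ j, condInfo q (zs j).1 (zs j).2 - N * μ|) := by
          rw [pairProb_eq_iidProb]
          exact one_sub_sub_le_iidProb_and_not hP0 hP _ _
      _ ≤ pairProb q N (fun as bs =>
            dec N (enc N as) bs = as ∧ N * (μ - ε) ≤ ∑ k, condInfo q (as k) (bs k)) := by
          rw [pairProb_eq_iidProb]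
          refine iidProb_mono hP0 fun zs ⟨hdec, htyp⟩ => ⟨hdec, ?_⟩
          linarith [(abs_lt.1 (not_le.1 htyp)).1]
      _ ≤ K N * 2 ^ (-(N * (μ - ε))) := pairProb_decoded_le hq hqsum (enc N) (dec N) _
      _ ≤ 2 ^ ((N : ℝ) * R) * 2 ^ (-(N * (μ - ε))) := by gcongr; exact hK N
      _ = 2 ^ ((N : ℝ) * (R - μ + ε)) := by
          rw [← rpow_add two_pos]
          congr 1
          ring
  have hlim := (tendsto_const_nhds (x := (1 : ℝ))).sub herr |>.sub hatyp
  rw [sub_zero, sub_zero] at hlim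
  linarith [nonneg_of_tendsto_one_of_le_rpow one_lt_two hlim hbound]

end Converse

theorem source_coding_converse {Z : Type*} [Fintype Z] [DecidableEq Z] {P : Z → ℝ}
    (hP0 : ∀ z, 0 ≤ P z) (hP : ∑ z, P z = 1) (R : ℝ) (K : ℕ → ℕ)
    (hK : ∀ N : ℕ, (K N : ℝ) ≤ 2 ^ ((N : ℝ) * R))
    (enc : ∀ N : ℕ, (Fin N → Z) → Fin (K N)) (dec : ∀ N : ℕ, Fin (K N) → Fin N → Z)
    (herr : Tendsto (fun N : ℕ => iidProb P N (fun zs => dec N (enc N zs) ≠ zs))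
      atTop (nhds 0)) :
    shannonH P ≤ R := by
  have h := sideInfo_coding_converse (fun z (_ : Unit) => P z) (fun z _ => hP0 z)
    (by simpa using hP) R K hK enc (fun N i _ => dec N i)
    (herr.congr fun N => by simp [pairProb, iidProb])
  have hjoint : shannonH (fun z : Z × Unit => P z.1) = shannonH P :=
    shannonH_comp_equiv (Equiv.prodPUnit Z) P
  have hside : shannonH (fun _ : Unit => ∑ z, P z) = 0 := by simp [shannonH, hP]
  linarith

theorem sum_rate_converse {X Y : Type*} [Fintype X] [Fintype Y] [DecidableEq X] [DecidableEq Y]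
    {p : X → Y → ℝ} (hp : ∀ x y, 0 ≤ p x y) (hsum : ∑ x, ∑ y, p x y = 1) {R₁ R₂ : ℝ}
    {K₁ K₂ : ℕ → ℕ} (hK₁ : ∀ N : ℕ, (K₁ N : ℝ) ≤ 2 ^ ((N : ℝ) * R₁))
    (hK₂ : ∀ N : ℕ, (K₂ N : ℝ) ≤ 2 ^ ((N : ℝ) * R₂))
    (enc₁ : ∀ N : ℕ, (Fin N → X) → Fin (K₁ N)) (enc₂ : ∀ N : ℕ, (Fin N → Y) → Fin (K₂ N))
    (dec : ∀ N : ℕ, Fin (K₁ N) × Fin (K₂ N) → (Fin N → X) × (Fin N → Y))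
    (herr : Tendsto (fun N => pairProb p N (fun xs ys => dec N (enc₁ N xs, enc₂ N ys) ≠ (xs, ys)))
      atTop (nhds 0)) :
    shannonH (fun z : X × Y => p z.1 z.2) ≤ R₁ + R₂ := by
  set e := fun N => Equiv.arrowProdEquivProdArrow (Fin N) (fun _ => X) (fun _ => Y)
  refine source_coding_converse (P := fun z : X × Y => p z.1 z.2) (fun z => hp z.1 z.2)
    ((Fintype.sum_prod_type _).trans hsum) (R₁ + R₂) (fun N => K₁ N * K₂ N) (fun N => ?_)
    (fun N zs => finProdFinEquiv (enc₁ N (e N zs).1, enc₂ N (e N zs).2))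
    (fun N i => (e N).symm (dec N (finProdFinEquiv.symm i)))
    (squeeze_zero (fun N => iidProb_nonneg (fun z : X × Y => hp z.1 z.2) N _) (fun N => ?_) herr)
  · rw [Nat.cast_mul, mul_add, rpow_add two_pos]
    exact mul_le_mul (hK₁ N) (hK₂ N) (Nat.cast_nonneg _) (by positivity)
  · rw [pairProb_eq_iidProb]
    refine iidProb_mono (fun z : X × Y => hp z.1 z.2) fun zs hzs he => hzs ?_
    simp only [Equiv.symm_apply_apply, Equiv.symm_apply_eq]
    exact he

/-- **Converse part of the Slepian–Wolf theorem.**  Sources `(Xᵢ, Yᵢ)` are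
i.i.d. with joint pmf `p` on finite alphabets.  For each block length `N`,
encoder 1 maps `X^N` into an index set of size `K₁ N ≤ 2^{N·R₁}`, encoder 2
maps `Y^N` into an index set of size `K₂ N ≤ 2^{N·R₂}`, and a decoder maps
the pair of indices to estimates `(X̂^N, Ŷ^N)`.  If the probability of error
`P((X̂^N, Ŷ^N) ≠ (X^N, Y^N))` (under the product measure) tends to `0` as
`N → ∞`, then `R₁ ≥ H(X|Y)`, `R₂ ≥ H(Y|X)`, and `R₁ + R₂ ≥ H(X,Y)`,
where `H` is the Shannon entropy, `H(X|Y) = H(X,Y) − H(Y)` and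
`H(Y|X) = H(X,Y) − H(X)`. -/
theorem slepian_wolf_converse
    {X Y : Type*} [Fintype X] [Fintype Y] [DecidableEq X] [DecidableEq Y]
    (p : X → Y → ℝ) (hp : ∀ x y, 0 ≤ p x y) (hsum : ∑ x, ∑ y, p x y = 1)
    (R₁ R₂ : ℝ) (K₁ K₂ : ℕ → ℕ)
    (enc₁ : ∀ N : ℕ, (Fin N → X) → Fin (K₁ N))
    (enc₂ : ∀ N : ℕ, (Fin N → Y) → Fin (K₂ N))
    (dec : ∀ N : ℕ, Fin (K₁ N) × Fin (K₂ N) → (Fin N → X) × (Fin N → Y))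
    (hK₁ : ∀ N : ℕ, (K₁ N : ℝ) ≤ (2 : ℝ) ^ ((N : ℝ) * R₁))
    (hK₂ : ∀ N : ℕ, (K₂ N : ℝ) ≤ (2 : ℝ) ^ ((N : ℝ) * R₂))
    (herr : Tendsto (fun N : ℕ =>
        ∑ xs : Fin N → X, ∑ ys : Fin N → Y,
          if dec N (enc₁ N xs, enc₂ N ys) ≠ (xs, ys)
          then ∏ k, p (xs k) (ys k) else 0)
      atTop (nhds 0)) :
    shannonH (fun z : X × Y => p z.1 z.2)
        - shannonH (fun y => ∑ x, p x y) ≤ R₁ ∧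
    shannonH (fun z : X × Y => p z.1 z.2)
        - shannonH (fun x => ∑ y, p x y) ≤ R₂ ∧
    shannonH (fun z : X × Y => p z.1 z.2) ≤ R₁ + R₂ := by
  change Tendsto (fun N => pairProb p N (fun xs ys => dec N (enc₁ N xs, enc₂ N ys) ≠ (xs, ys)))
    atTop (nhds 0) at herr
  refine ⟨?_, ?_, ?_⟩
  · refine sideInfo_coding_converse p hp hsum R₁ K₁ hK₁ enc₁
      (fun N i ys => (dec N (i, enc₂ N ys)).1) (tendsto_pairProb_of_imp hp ?_ herr)
    exact fun N xs ys hx he => hx (by rw [he])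
  · have h := sideInfo_coding_converse (fun y x => p x y) (fun y x => hp x y)
      (by rwa [sum_comm]) R₂ K₂ hK₂ enc₂ (fun N i xs => (dec N (enc₁ N xs, i)).2)
      ((tendsto_pairProb_of_imp hp ?_ herr).congr fun N => (pairProb_swap p N _).symm)
    · have hswap : shannonH (fun z : Y × X => p z.2 z.1) = shannonH (fun z : X × Y => p z.1 z.2) :=
        shannonH_comp_equiv (Equiv.prodComm Y X) (fun z : X × Y => p z.1 z.2)
      rwa [hswap] at h
    exact fun N xs ys hy he => hy (by rw [he])
  · exact sum_rate_converse hp hsum hK₁ hK₂ enc₁ enc₂ dec herr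
end

section
/- In a directed tree network rooted at a collector, where each edge is a cut-edge, the component-wise (per-edge) minimal number of bits for zero-error function computation is achieved simultaneously on all edges: for each edge e, the minimum equals log₂ of the number of equivalence classes of the inputs of the subtree below e, under the relation identifying input tuples that yield equal function values for all inputs of the complementary nodes. -/
section TreeComputation

variable {n : ℕ} (parent : Fin (n + 1) → Fin (n + 1))
variable (X : Fin (n + 1) → Type) {D : Type}

/-- The subtree below the edge out of `v`: the set of nodes whose chain of
parents passes through `v` (including `v` itself). -/
def inSubtree (v u : Fin (n + 1)) : Prop := ∃ k : ℕ, parent^[k] u = v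

/-- An assignment of measurements to the nodes of the subtree rooted at `v`. -/
def SubInput (v : Fin (n + 1)) : Type :=
  (u : {u : Fin (n + 1) // inSubtree parent v u}) → X u.1

open Classical in
/-- Combine a subtree assignment with an assignment `z` to the complementary
nodes into a full assignment. -/
noncomputable def combine (v : Fin (n + 1)) (xT : SubInput parent X v)
    (z : (u : Fin (n + 1)) → X u) : (u : Fin (n + 1)) → X u :=
  fun u => if h : inSubtree parent v u then xT ⟨u, h⟩ else z u

/-- Two subtree inputs are equivalent iff they yield equal function values
for every assignment to the complementary nodes. -/
def subtreeSetoid (f : ((u : Fin (n + 1)) → X u) → D) (v : Fin (n + 1)) :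
    Setoid (SubInput parent X v) where
  r xT xT' := ∀ z, f (combine parent X v xT z) = f (combine parent X v xT' z)
  iseqv := ⟨fun _ _ => rfl, fun h z => (h z).symm, fun h₁ h₂ z => (h₁ z).trans (h₂ z)⟩

/-- The number of equivalence classes of subtree inputs below the edge out
of `v`. -/
noncomputable def numClasses (f : ((u : Fin (n + 1)) → X u) → D)
    (v : Fin (n + 1)) : ℕ :=
  Nat.card (Quotient (subtreeSetoid parent X f v))

/-- The message maps `m` form a valid in-network protocol with per-edge
alphabet sizes `c`: the message sent by each non-root node `v` to its parent
is a function only of `v`'s own measurement and of the messages received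
from its children. -/
def IsTreeProtocol (c : Fin (n + 1) → ℕ)
    (m : (v : Fin (n + 1)) → ((u : Fin (n + 1)) → X u) → Fin (c v)) : Prop :=
  ∀ v : Fin (n + 1), v ≠ 0 →
    ∃ φ : X v → ((u : {u : Fin (n + 1) // parent u = v ∧ u ≠ v}) → Fin (c u.1))
        → Fin (c v),
      ∀ x, m v x = φ (x v) fun u => m u.1 x

/-- The root (collector, node `0`) computes `f` with zero error from its own
measurement and its children's messages. -/
def RootComputes (f : ((u : Fin (n + 1)) → X u) → D) (c : Fin (n + 1) → ℕ)
    (m : (v : Fin (n + 1)) → ((u : Fin (n + 1)) → X u) → Fin (c v)) : Prop :=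
  ∃ g : X 0 → ((u : {u : Fin (n + 1) // parent u = 0 ∧ u ≠ 0}) → Fin (c u.1)) → D,
    ∀ x, g (x 0) (fun u => m u.1 x) = f x


section TreeAux
open Classical

variable {n : ℕ} {parent : Fin (n + 1) → Fin (n + 1)}
variable {X : Fin (n + 1) → Type} {D : Type}

lemma subtree_refl' (v : Fin (n + 1)) : inSubtree parent v v := ⟨0, rfl⟩

lemma subtree_trans' {v w u : Fin (n + 1)} (h1 : inSubtree parent v w)
    (h2 : inSubtree parent w u) : inSubtree parent v u := by
  obtain ⟨j, hj⟩ := h1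
  obtain ⟨k, hk⟩ := h2
  exact ⟨j + k, by rw [Function.iterate_add_apply, hk, hj]⟩

lemma child_subtree' {v w : Fin (n + 1)} (hp : parent w = v) : inSubtree parent v w :=
  ⟨1, by simpa using hp⟩

lemma parent_le' (hroot : parent 0 = 0) (hpar : ∀ v : Fin (n + 1), v ≠ 0 → parent v < v)
    (x : Fin (n + 1)) : parent x ≤ x := by
  by_cases h : x = 0
  · subst h; simp [hroot]
  · exact (hpar x h).le

lemma iterate_le' (hroot : parent 0 = 0) (hpar : ∀ v : Fin (n + 1), v ≠ 0 → parent v < v)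
    (k : ℕ) (x : Fin (n + 1)) : parent^[k] x ≤ x := by
  induction k with
  | zero => simp
  | succ k ih =>
    rw [Function.iterate_succ_apply']
    exact (parent_le' hroot hpar _).trans ih

lemma not_subtree_of_lt' (hroot : parent 0 = 0) (hpar : ∀ v : Fin (n + 1), v ≠ 0 → parent v < v)
    {v w : Fin (n + 1)} (h : v < w) : ¬ inSubtree parent w v := by
  rintro ⟨k, hk⟩
  have h2 := iterate_le' hroot hpar k v
  rw [hk] at h2
  exact absurd h (not_lt.mpr h2)

lemma child_lt' (hroot : parent 0 = 0) (hpar : ∀ v : Fin (n + 1), v ≠ 0 → parent v < v)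
    {v w : Fin (n + 1)} (hp : parent w = v) (hne : w ≠ v) : v < w := by
  have hw0 : w ≠ 0 := by
    rintro rfl
    exact hne (hroot.symm.trans hp)
  have := hpar w hw0
  rwa [hp] at this

lemma iterate_root' (hroot : parent 0 = 0) (k : ℕ) : parent^[k] (0 : Fin (n + 1)) = 0 := by
  induction k with
  | zero => rfl
  | succ k ih => rw [Function.iterate_succ_apply', ih, hroot]

lemma root_not_subtree' (hroot : parent 0 = 0) {v : Fin (n + 1)} (hv : v ≠ 0) :
    ¬ inSubtree parent v 0 := by
  rintro ⟨k, hk⟩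
  rw [iterate_root' hroot] at hk
  exact hv hk.symm

lemma anc_eq' (hroot : parent 0 = 0) (hpar : ∀ v : Fin (n + 1), v ≠ 0 → parent v < v)
    {v w w' : Fin (n + 1)} (hp : parent w = v) (hlt : v < w')
    {d : ℕ} (hd : parent^[d] w = w') : w = w' := by
  cases d with
  | zero => exact hd
  | succ m =>
    rw [Function.iterate_succ_apply, hp] at hd
    have h := iterate_le' hroot hpar m v
    rw [hd] at h
    exact absurd hlt (not_lt.mpr h)

lemma children_disjoint' (hroot : parent 0 = 0) (hpar : ∀ v : Fin (n + 1), v ≠ 0 → parent v < v)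
    {v w w' u : Fin (n + 1)}
    (hp : parent w = v) (hne : w ≠ v) (hp' : parent w' = v) (hne' : w' ≠ v)
    (h1 : inSubtree parent w u) (h2 : inSubtree parent w' u) : w = w' := by
  obtain ⟨k, hk⟩ := h1
  obtain ⟨j, hj⟩ := h2
  rcases le_total k j with h | h
  · refine anc_eq' hroot hpar hp (child_lt' hroot hpar hp' hne') (d := j - k) ?_
    rw [← hk, ← Function.iterate_add_apply, Nat.sub_add_cancel h, hj]
  · exact (anc_eq' hroot hpar hp' (child_lt' hroot hpar hp hne) (d := k - j)
      (by rw [← hj, ← Function.iterate_add_apply, Nat.sub_add_cancel h, hk])).symm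

lemma exists_child' {v u : Fin (n + 1)} (h : inSubtree parent v u) (hne : u ≠ v) :
    ∃ w, parent w = v ∧ w ≠ v ∧ inSubtree parent w u := by
  classical
  have h' : ∃ k, parent^[k] u = v := h
  have hspec := Nat.find_spec h'
  have hk0 : Nat.find h' ≠ 0 := by
    intro h0
    rw [h0] at hspec
    exact hne hspec
  obtain ⟨m, hm⟩ := Nat.exists_eq_succ_of_ne_zero hk0
  rw [hm, Function.iterate_succ_apply'] at hspec
  refine ⟨parent^[m] u, hspec, ?_, ⟨m, rfl⟩⟩
  intro hcon
  exact Nat.find_min h' (by rw [hm]; exact Nat.lt_succ_self m) hcon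

lemma subtree_root' (hpar : ∀ v : Fin (n + 1), v ≠ 0 → parent v < v)
    (u : Fin (n + 1)) : inSubtree parent 0 u := by
  have H : ∀ k : ℕ, ∀ u : Fin (n + 1), (u : ℕ) < k → inSubtree parent 0 u := by
    intro k
    induction k with
    | zero => intro u hu; omega
    | succ k ih =>
      intro u hu
      by_cases h : u = 0
      · exact ⟨0, h⟩
      · obtain ⟨m, hm⟩ := ih (parent u) (by have := Fin.lt_def.mp (hpar u h); omega)
        exact ⟨m + 1, by rw [Function.iterate_succ_apply, hm]⟩
  exact H ((u : ℕ) + 1) u (Nat.lt_succ_self _)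

noncomputable def restrict' (parent : Fin (n + 1) → Fin (n + 1)) (X : Fin (n + 1) → Type)
    (v : Fin (n + 1)) (x : (u : Fin (n + 1)) → X u) : SubInput parent X v :=
  fun u => x u.1

noncomputable def restrictSub' {v w : Fin (n + 1)} (hw : inSubtree parent v w)
    (xT : SubInput parent X v) : SubInput parent X w :=
  fun u => xT ⟨u.1, subtree_trans' hw u.2⟩

lemma transfer' (f : ((u : Fin (n + 1)) → X u) → D) {v w : Fin (n + 1)}
    (hw : inSubtree parent v w) (xT xT' : SubInput parent X v)
    (hoff : ∀ u : {u : Fin (n + 1) // inSubtree parent v u},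
      ¬ inSubtree parent w u.1 → xT u = xT' u)
    (heq : ∀ z, f (combine parent X w (restrictSub' hw xT) z)
              = f (combine parent X w (restrictSub' hw xT') z)) :
    ∀ z, f (combine parent X v xT z) = f (combine parent X v xT' z) := by
  intro z
  have h1 : combine parent X w (restrictSub' hw xT) (combine parent X v xT z)
      = combine parent X v xT z := by
    funext u
    by_cases h : inSubtree parent w u
    · simp only [combine, dif_pos h, dif_pos (subtree_trans' hw h)]
      rfl
    · simp only [combine, dif_neg h]
  have h2 : combine parent X w (restrictSub' hw xT') (combine parent X v xT z)
      = combine parent X v xT' z := by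
    funext u
    by_cases h : inSubtree parent w u
    · simp only [combine, dif_pos h, dif_pos (subtree_trans' hw h)]
      rfl
    · by_cases h' : inSubtree parent v u
      · simp only [combine, dif_neg h, dif_pos h']
        exact hoff ⟨u, h'⟩ h
      · simp only [combine, dif_neg h, dif_neg h']
  calc f (combine parent X v xT z)
      = f (combine parent X w (restrictSub' hw xT) (combine parent X v xT z)) := by rw [h1]
    _ = f (combine parent X w (restrictSub' hw xT') (combine parent X v xT z)) := heq _
    _ = f (combine parent X v xT' z) := by rw [h2]

noncomputable def hyb' (parent : Fin (n + 1) → Fin (n + 1)) (X : Fin (n + 1) → Type)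
    (v : Fin (n + 1)) (xT xT' : SubInput parent X v) (S : Finset (Fin (n + 1))) :
    SubInput parent X v :=
  fun u => if ∃ w ∈ S, inSubtree parent w u.1 then xT' u else xT u

lemma combine_children' (hroot : parent 0 = 0)
    (hpar : ∀ v : Fin (n + 1), v ≠ 0 → parent v < v)
    (f : ((u : Fin (n + 1)) → X u) → D) {v : Fin (n + 1)}
    (xT xT' : SubInput parent X v)
    (hv : xT ⟨v, subtree_refl' v⟩ = xT' ⟨v, subtree_refl' v⟩)
    (hch : ∀ w (hp : parent w = v) (_ : w ≠ v),
      ∀ z, f (combine parent X w (restrictSub' (child_subtree' hp) xT) z)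
         = f (combine parent X w (restrictSub' (child_subtree' hp) xT') z)) :
    ∀ z, f (combine parent X v xT z) = f (combine parent X v xT' z) := by
  classical
  have key : ∀ S : Finset (Fin (n + 1)), (∀ w ∈ S, parent w = v ∧ w ≠ v) → ∀ z,
      f (combine parent X v xT z) = f (combine parent X v (hyb' parent X v xT xT' S) z) := by
    intro S
    induction S using Finset.induction_on with
    | empty =>
      intro _ z
      have he : hyb' parent X v xT xT' ∅ = xT := by
        funext u
        simp [hyb']
      rw [he]
    | @insert w S hwS ih =>
      intro hS z
      obtain ⟨hp, hne⟩ := hS w (Finset.mem_insert_self w S)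
      have hS' : ∀ w' ∈ S, parent w' = v ∧ w' ≠ v :=
        fun w' hw' => hS w' (Finset.mem_insert_of_mem hw')
      have e1 : restrictSub' (child_subtree' hp) (hyb' parent X v xT xT' S)
          = restrictSub' (child_subtree' hp) xT := by
        funext u
        simp only [restrictSub', hyb']
        rw [if_neg]
        rintro ⟨w', hw', hsub⟩
        obtain ⟨hp', hne'⟩ := hS' w' hw'
        exact hwS ((children_disjoint' hroot hpar hp' hne' hp hne hsub u.2).symm ▸ hw')
      have e2 : restrictSub' (child_subtree' hp) (hyb' parent X v xT xT' (insert w S))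
          = restrictSub' (child_subtree' hp) xT' := by
        funext u
        simp only [restrictSub', hyb']
        rw [if_pos ⟨w, Finset.mem_insert_self w S, u.2⟩]
      have step : ∀ z, f (combine parent X v (hyb' parent X v xT xT' S) z)
          = f (combine parent X v (hyb' parent X v xT xT' (insert w S)) z) := by
        apply transfer' f (child_subtree' hp)
        · intro u hu
          simp only [hyb']
          have hiff : (∃ w' ∈ insert w S, inSubtree parent w' u.1)
              ↔ (∃ w' ∈ S, inSubtree parent w' u.1) := by
            constructor
            · rintro ⟨w', hw', hsub⟩
              rcases Finset.mem_insert.mp hw' with rfl | hmem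
              · exact absurd hsub hu
              · exact ⟨w', hmem, hsub⟩
            · rintro ⟨w', hmem, hsub⟩
              exact ⟨w', Finset.mem_insert_of_mem hmem, hsub⟩
          simp only [hiff]
        · rw [e1, e2]
          exact hch w hp hne
      exact (ih hS' z).trans (step z)
  intro z
  have hfin : hyb' parent X v xT xT'
      (Finset.univ.filter fun w => parent w = v ∧ w ≠ v) = xT' := by
    funext u
    obtain ⟨uv, hu⟩ := u
    simp only [hyb']
    by_cases h : uv = v
    · subst h
      rw [if_neg]
      · exact hv
      · rintro ⟨w', hw', hsub⟩
        simp only [Finset.mem_filter] at hw'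
        obtain ⟨-, hp', hne'⟩ := hw'
        exact not_subtree_of_lt' hroot hpar (child_lt' hroot hpar hp' hne') hsub
    · obtain ⟨w, hp, hne, hsub⟩ := exists_child' hu h
      rw [if_pos ⟨w, Finset.mem_filter.mpr ⟨Finset.mem_univ w, hp, hne⟩, hsub⟩]
  have := key (Finset.univ.filter fun w => parent w = v ∧ w ≠ v)
    (fun w hw => (Finset.mem_filter.mp hw).2) z
  rwa [hfin] at this

noncomputable def eqv' (parent : Fin (n + 1) → Fin (n + 1)) (X : Fin (n + 1) → Type)
    [∀ v, Fintype (X v)] (f : ((u : Fin (n + 1)) → X u) → D) (v : Fin (n + 1)) :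
    Quotient (subtreeSetoid parent X f v) ≃ Fin (numClasses parent X f v) := by
  have h1 : Finite (SubInput parent X v) := by
    unfold SubInput
    infer_instance
  have h2 : Finite (Quotient (subtreeSetoid parent X f v)) := Quotient.finite _
  exact Finite.equivFin _

noncomputable def build' (parent : Fin (n + 1) → Fin (n + 1)) (X : Fin (n + 1) → Type)
    [∀ v, Fintype (X v)] (f : ((u : Fin (n + 1)) → X u) → D) (v : Fin (n + 1)) (xv : X v)
    (msgs : (u : {u : Fin (n + 1) // parent u = v ∧ u ≠ v}) → Fin (numClasses parent X f u.1)) :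
    SubInput parent X v :=
  fun u =>
    if h : u.1 = v then cast (congrArg X h.symm) xv
    else
      ((eqv' parent X f (Classical.choose (exists_child' u.2 h))).symm
        (msgs ⟨Classical.choose (exists_child' u.2 h),
               (Classical.choose_spec (exists_child' u.2 h)).1,
               (Classical.choose_spec (exists_child' u.2 h)).2.1⟩)).out
        ⟨u.1, (Classical.choose_spec (exists_child' u.2 h)).2.2⟩

lemma build_self' (parent : Fin (n + 1) → Fin (n + 1)) (X : Fin (n + 1) → Type)
    [∀ v, Fintype (X v)] (f : ((u : Fin (n + 1)) → X u) → D) (v : Fin (n + 1)) (xv : X v)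
    (msgs : (u : {u : Fin (n + 1) // parent u = v ∧ u ≠ v}) → Fin (numClasses parent X f u.1)) :
    build' parent X f v xv msgs ⟨v, subtree_refl' v⟩ = xv := by
  simp [build']

lemma build_child' (hroot : parent 0 = 0) (hpar : ∀ v : Fin (n + 1), v ≠ 0 → parent v < v)
    [∀ v, Fintype (X v)] (f : ((u : Fin (n + 1)) → X u) → D) {v w : Fin (n + 1)}
    (hp : parent w = v) (hne : w ≠ v) (xv : X v)
    (msgs : (u : {u : Fin (n + 1) // parent u = v ∧ u ≠ v}) → Fin (numClasses parent X f u.1)) :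
    restrictSub' (child_subtree' hp) (build' parent X f v xv msgs)
      = ((eqv' parent X f w).symm (msgs ⟨w, hp, hne⟩)).out := by
  funext u
  obtain ⟨uv, hu⟩ := u
  have huv : inSubtree parent v uv := subtree_trans' (child_subtree' hp) hu
  have hnev : uv ≠ v := fun h =>
    not_subtree_of_lt' hroot hpar (child_lt' hroot hpar hp hne) (h ▸ hu)
  show build' parent X f v xv msgs ⟨uv, huv⟩ = _
  simp only [build', dif_neg hnev]
  have hw' := Classical.choose_spec (exists_child' huv hnev)
  have hcw : Classical.choose (exists_child' huv hnev) = w :=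
    children_disjoint' hroot hpar hw'.1 hw'.2.1 hp hne hw'.2.2 hu
  have key : ∀ (w₁ : Fin (n + 1)) (h1 : parent w₁ = v) (h2 : w₁ ≠ v)
      (h3 : inSubtree parent w₁ uv), w₁ = w →
      ((eqv' parent X f w₁).symm (msgs ⟨w₁, h1, h2⟩)).out ⟨uv, h3⟩
        = ((eqv' parent X f w).symm (msgs ⟨w, hp, hne⟩)).out ⟨uv, hu⟩ := by
    rintro w₁ h1 h2 h3 rfl
    rfl
  exact key _ hw'.1 hw'.2.1 hw'.2.2 hcw

end TreeAux
/-- **Per-edge optimal zero-error function computation on a directed tree.**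
A directed tree on nodes `0,1,…,n` rooted at the collector `0` is given by a
parent map with `parent 0 = 0` and `parent v < v` for `v ≠ 0` (so every edge
`(v, parent v)` is a cut-edge separating the subtree below `v` from the
rest).  Node `u` holds a measurement in the finite set `X u`, and the
collector must compute `f` with zero error, each node sending one message to
its parent after hearing its children (block length 1, fixed-length codes).
Then the minimal per-edge message alphabet sizes are achieved simultaneously
on all edges: (1) there is a valid protocol computing `f` in which the
message alphabet on every edge `(v, parent v)` has exactly `numClasses f v`
values — `log₂` of which is the minimal number of bits — where
`numClasses f v` counts the equivalence classes of subtree inputs under the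
relation identifying tuples that give equal function values for all inputs
of the complementary nodes; and (2) every valid protocol computing `f` uses
at least `numClasses f v` messages on each edge. -/
theorem tree_per_edge_optimal_computation
    (hroot : parent 0 = 0) (hpar : ∀ v : Fin (n + 1), v ≠ 0 → parent v < v)
    [∀ v, Fintype (X v)] [Nonempty D]
    (f : ((u : Fin (n + 1)) → X u) → D) :
    (∃ m : (v : Fin (n + 1)) → ((u : Fin (n + 1)) → X u)
        → Fin (numClasses parent X f v),
      IsTreeProtocol parent X (numClasses parent X f) m ∧
      RootComputes parent X f (numClasses parent X f) m) ∧
    (∀ (c : Fin (n + 1) → ℕ)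
        (m : (v : Fin (n + 1)) → ((u : Fin (n + 1)) → X u) → Fin (c v)),
      IsTreeProtocol parent X c m → RootComputes parent X f c m →
      ∀ v : Fin (n + 1), v ≠ 0 → numClasses parent X f v ≤ c v) := by
  classical
  constructor
  · -- Existence of the optimal protocol
    refine ⟨fun v x => eqv' parent X f v (Quotient.mk _ (restrict' parent X v x)), ?_, ?_⟩
    · intro v hv
      refine ⟨fun xv msgs => eqv' parent X f v (Quotient.mk _ (build' parent X f v xv msgs)), ?_⟩
      intro x
      dsimp only
      apply congrArg
      refine Quotient.sound (combine_children' hroot hpar f _ _ ?_ ?_)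
      · exact (build_self' parent X f v (x v) _).symm
      · intro w hp hne
        rw [build_child' hroot hpar f hp hne, Equiv.symm_apply_apply]
        have h := Quotient.exact (Quotient.out_eq
          (Quotient.mk (subtreeSetoid parent X f w) (restrict' parent X w x)))
        exact fun z => (h z).symm
    · refine ⟨fun x0 msgs =>
        f (fun u => build' parent X f 0 x0 msgs ⟨u, subtree_root' hpar u⟩), ?_⟩
      intro x
      dsimp only
      have hr := combine_children' hroot hpar f
        (restrict' parent X 0 x)
        (build' parent X f 0 (x 0)
          (fun u => eqv' parent X f u.1 (Quotient.mk _ (restrict' parent X u.1 x))))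
        ((build_self' parent X f 0 (x 0) _).symm)
        (by
          intro w hp hne
          rw [build_child' hroot hpar f hp hne, Equiv.symm_apply_apply]
          have h := Quotient.exact (Quotient.out_eq
            (Quotient.mk (subtreeSetoid parent X f w) (restrict' parent X w x)))
          exact fun z => (h z).symm)
      have h1 : combine parent X 0 (restrict' parent X 0 x) x = x := by
        funext u
        simp only [combine, restrict']
        split <;> rfl
      have h2 : combine parent X 0 (build' parent X f 0 (x 0)
            (fun u => eqv' parent X f u.1 (Quotient.mk _ (restrict' parent X u.1 x)))) x
          = fun u => build' parent X f 0 (x 0)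
            (fun u => eqv' parent X f u.1 (Quotient.mk _ (restrict' parent X u.1 x)))
            ⟨u, subtree_root' hpar u⟩ := by
        funext u
        simp only [combine, dif_pos (subtree_root' hpar u)]
      have hx := hr x
      rw [h1, h2] at hx
      exact hx.symm
  · -- Lower bound
    intro c m hproto hcomp v hv
    have down : ∀ (P : Fin (n + 1) → Prop),
        (∀ u : Fin (n + 1), (∀ w : Fin (n + 1), u < w → P w) → P u) → ∀ u, P u := by
      intro P hstep u
      have H : ∀ d : ℕ, ∀ u : Fin (n + 1), n - (u : ℕ) < d → P u := by
        intro d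
        induction d with
        | zero => intro u hu; omega
        | succ d ih =>
          intro u hu
          apply hstep
          intro w hw
          apply ih
          have h1 : (u : ℕ) < (w : ℕ) := hw
          have h2 : (w : ℕ) ≤ n := Nat.lt_succ_iff.mp w.isLt
          omega
      exact H (n - (u : ℕ) + 1) u (Nat.lt_succ_self _)
    by_cases hfull : Nonempty ((u : Fin (n + 1)) → X u)
    · obtain ⟨z₀⟩ := hfull
      have msg_dep : ∀ u : Fin (n + 1), u ≠ 0 → ∀ x x',
          (∀ t, inSubtree parent u t → x t = x' t) → m u x = m u x' := by
        refine down (fun u => u ≠ 0 → ∀ x x',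
          (∀ t, inSubtree parent u t → x t = x' t) → m u x = m u x') ?_
        intro u ih hu0 x x' hagree
        obtain ⟨φ, hφ⟩ := hproto u hu0
        rw [hφ x, hφ x']
        have hxu : x u = x' u := hagree u (subtree_refl' u)
        have hmsg : (fun w : {w : Fin (n + 1) // parent w = u ∧ w ≠ u} => m w.1 x)
            = fun w : {w : Fin (n + 1) // parent w = u ∧ w ≠ u} => m w.1 x' := by
          funext w
          obtain ⟨w, hp, hne⟩ := w
          have hw0 : w ≠ 0 := by
            rintro rfl
            exact hu0 (hroot.symm.trans hp).symm
          exact ih w (child_lt' hroot hpar hp hne) hw0 x x'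
            (fun t ht => hagree t (subtree_trans' (child_subtree' hp) ht))
        rw [hxu, hmsg]
      have key : ∀ xT xT' : SubInput parent X v,
          m v (combine parent X v xT z₀) = m v (combine parent X v xT' z₀) →
          ∀ z, f (combine parent X v xT z) = f (combine parent X v xT' z) := by
        intro xT xT' hm z
        have hmz : m v (combine parent X v xT z) = m v (combine parent X v xT' z) := by
          have ha : ∀ yT : SubInput parent X v,
              m v (combine parent X v yT z) = m v (combine parent X v yT z₀) :=
            fun yT => msg_dep v hv _ _ (fun t ht => by
              simp only [combine, dif_pos ht])
          rw [ha xT, ha xT', hm]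
        have claim : ∀ u : Fin (n + 1), ¬ inSubtree parent v u → u ≠ 0 →
            m u (combine parent X v xT z) = m u (combine parent X v xT' z) := by
          refine down (fun u => ¬ inSubtree parent v u → u ≠ 0 →
            m u (combine parent X v xT z) = m u (combine parent X v xT' z)) ?_
          intro u ih hnsub hu0
          obtain ⟨φ, hφ⟩ := hproto u hu0
          rw [hφ _, hφ _]
          have hxu : combine parent X v xT z u = combine parent X v xT' z u := by
            simp only [combine, dif_neg hnsub]
          have hmsg : (fun w : {w : Fin (n + 1) // parent w = u ∧ w ≠ u} =>
                m w.1 (combine parent X v xT z))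
              = fun w : {w : Fin (n + 1) // parent w = u ∧ w ≠ u} =>
                m w.1 (combine parent X v xT' z) := by
            funext w
            obtain ⟨w, hp, hne⟩ := w
            by_cases hwv : w = v
            · subst hwv; exact hmz
            · have hw0 : w ≠ 0 := by
                rintro rfl
                exact hu0 (hroot.symm.trans hp).symm
              have hns : ¬ inSubtree parent v w := by
                rintro ⟨k, hk⟩
                cases k with
                | zero => exact hwv hk
                | succ k' =>
                  rw [Function.iterate_succ_apply, hp] at hk
                  exact hnsub ⟨k', hk⟩
              exact ih w (child_lt' hroot hpar hp hne) hns hw0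
          rw [hxu, hmsg]
        obtain ⟨g, hg⟩ := hcomp
        rw [← hg (combine parent X v xT z), ← hg (combine parent X v xT' z)]
        have h0 : combine parent X v xT z 0 = combine parent X v xT' z 0 := by
          simp only [combine, dif_neg (root_not_subtree' hroot hv)]
        have hms : (fun u : {u : Fin (n + 1) // parent u = 0 ∧ u ≠ 0} =>
              m u.1 (combine parent X v xT z))
            = fun u : {u : Fin (n + 1) // parent u = 0 ∧ u ≠ 0} =>
              m u.1 (combine parent X v xT' z) := by
          funext u
          obtain ⟨u, hp, hne⟩ := u
          by_cases huv : u = v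
          · subst huv; exact hmz
          · refine claim u ?_ hne
            rintro ⟨k, hk⟩
            cases k with
            | zero => exact huv hk
            | succ k' =>
              rw [Function.iterate_succ_apply, hp, iterate_root' hroot] at hk
              exact hv hk.symm
        rw [h0, hms]
      have hinj : Function.Injective
          (fun q : Quotient (subtreeSetoid parent X f v) =>
            m v (combine parent X v q.out z₀)) := by
        intro q q' h
        rw [← Quotient.out_eq q, ← Quotient.out_eq q']
        exact Quotient.sound (key _ _ h)
      have hcard := Nat.card_le_card_of_injective _ hinj
      simpa [numClasses, Nat.card_eq_fintype_card] using hcard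
    · have hO : ∀ a b : Quotient (subtreeSetoid parent X f v), a = b := by
        intro a b
        induction a using Quotient.ind with | _ a =>
        induction b using Quotient.ind with | _ b =>
        exact Quotient.sound (fun z => absurd ⟨z⟩ hfull)
      by_cases hsub : Nonempty (SubInput parent X v)
      · have hone : numClasses parent X f v = 1 := by
          rw [numClasses]
          rw [Nat.card_eq_one_iff_unique]
          exact ⟨⟨hO⟩, ⟨Quotient.mk (subtreeSetoid parent X f v) hsub.some⟩⟩
        have hpos : ∀ u : Fin (n + 1), u ≠ 0 →
            (∀ t, inSubtree parent u t → Nonempty (X t)) → 0 < c u := by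
          refine down (fun u => u ≠ 0 →
            (∀ t, inSubtree parent u t → Nonempty (X t)) → 0 < c u) ?_
          intro u ih hu0 hX
          obtain ⟨φ, hφ⟩ := hproto u hu0
          have hch : ∀ w : {w : Fin (n + 1) // parent w = u ∧ w ≠ u},
              Nonempty (Fin (c w.1)) := by
            rintro ⟨w, hp, hne⟩
            have hw0 : w ≠ 0 := by
              rintro rfl
              exact hu0 (hroot.symm.trans hp).symm
            have hcw := ih w (child_lt' hroot hpar hp hne) hw0
              (fun t ht => hX t (subtree_trans' (child_subtree' hp) ht))
            exact ⟨⟨0, hcw⟩⟩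
          have hxu := hX u (subtree_refl' u)
          exact Nat.lt_of_le_of_lt (Nat.zero_le _)
            (φ hxu.some (fun w => (hch w).some)).isLt
        have := hpos v hv (fun t ht => ⟨hsub.some ⟨t, ht⟩⟩)
        omega
      · have hempty : IsEmpty (Quotient (subtreeSetoid parent X f v)) := by
          constructor
          intro q
          exact hsub ⟨q.out⟩
        have hzero : numClasses parent X f v = 0 := by
          rw [numClasses]
          exact Nat.card_of_isEmpty
        omega

end TreeComputation
end
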